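/- arXiv:1806.11240 — 2 statements merged into one kernel-verified Lean document; each statement's English description precedes it below -/
import Mathlib

section
/- Let (X, d) be a metric space, δ₁, δ₂, δ₁′, δ₂′ : (0,η) → X arcs, and q a real number such that d(δᵢ(t), δᵢ′(t)) = Θ(t^q) for i = 1, 2 (i.e. δᵢ and δᵢ′ are joined by 'paths' of size Θ(t^q)). If d(δ₁′(t), δ₂′(t)) = Θ(t^{q'}) with q' < q, and d(δ₁(t), δ₂(t)) = Θ(t^{q''}), then q'' = q'. In other words, contact exponents strictly smaller than the correction exponent are preserved. -/
/-!
Read `Θ` as a Landau relation along `t → 0⁺`. By the reverse triangle inequality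
`|d(δ₁, δ₂) - d(δ₁', δ₂')| ≤ d(δ₁, δ₁') + d(δ₂, δ₂') = O(t^q) = o(t^q')`, so `d(δ₁, δ₂)` is
asymptotically equivalent to `d(δ₁', δ₂') = Θ(t^q')`. Hence `t^q'' = Θ(t^q')`, which forces
`q'' = q'` because `t^b = o(t^a)` as `t → 0⁺` whenever `a < b`.
-/

/-- `f(t) = Θ(t^q)` as `t → 0⁺`. -/
def ThetaAt (f : ℝ → ℝ) (q : ℝ) : Prop :=
  ∃ η > (0 : ℝ), ∃ K : ℝ, 1 ≤ K ∧
    ∀ t : ℝ, 0 < t → t < η → (1 / K) * t ^ q ≤ f t ∧ f t ≤ K * t ^ q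

open Filter Topology Asymptotics

theorem ThetaAt.isTheta {f : ℝ → ℝ} {q : ℝ} (hf : ThetaAt f q) :
    f =Θ[𝓝[>] 0] fun t => t ^ q := by
  obtain ⟨η, hη, K, hK, H⟩ := hf
  have hKpos : 0 < K := one_pos.trans_le hK
  have hnear : ∀ᶠ t in 𝓝[>] (0 : ℝ), 0 < t ∧ t < η := Ioo_mem_nhdsGT hη
  constructor
  · refine IsBigO.of_bound K (hnear.mono fun t ⟨ht, htη⟩ => ?_)
    obtain ⟨hlow, hup⟩ := H t ht htη
    have htq : 0 ≤ t ^ q := Real.rpow_nonneg ht.le q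
    rw [Real.norm_of_nonneg (le_trans (by positivity) hlow), Real.norm_of_nonneg htq]
    exact hup
  · refine IsBigO.of_bound K (hnear.mono fun t ⟨ht, htη⟩ => ?_)
    obtain ⟨hlow, -⟩ := H t ht htη
    have htq : 0 ≤ t ^ q := Real.rpow_nonneg ht.le q
    rw [Real.norm_of_nonneg htq, Real.norm_of_nonneg (le_trans (by positivity) hlow)]
    rw [one_div, inv_mul_le_iff₀ hKpos] at hlow
    exact hlow

theorem isLittleO_rpow_rpow_nhdsGT_zero {a b : ℝ} (hab : a < b) :
    (fun t : ℝ => t ^ b) =o[𝓝[>] 0] fun t => t ^ a := by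
  have hsmall : (fun t : ℝ => t ^ (b - a)) =o[𝓝[>] 0] fun _ => (1 : ℝ) := by
    rw [isLittleO_one_iff]
    have hcont := Real.continuousAt_rpow_const 0 (b - a) (Or.inr (sub_pos.mpr hab).le)
    simpa [Real.zero_rpow (sub_pos.mpr hab).ne'] using hcont.tendsto.mono_left nhdsWithin_le_nhds
  refine ((isBigO_refl (fun t : ℝ => t ^ a) _).mul_isLittleO hsmall).congr' ?_ (by simp)
  filter_upwards [self_mem_nhdsWithin] with t ht
  rw [← Real.rpow_add ht, add_sub_cancel]

theorem eq_of_isTheta_rpow_nhdsGT_zero {a b : ℝ}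
    (h : (fun t : ℝ => t ^ a) =Θ[𝓝[>] 0] fun t => t ^ b) : a = b := by
  have hne (c : ℝ) : ∃ᶠ t in 𝓝[>] (0 : ℝ), t ^ c ≠ 0 := by
    refine Eventually.frequently ?_
    filter_upwards [self_mem_nhdsWithin] with t (ht : 0 < t)
    exact (Real.rpow_pos_of_pos ht c).ne'
  rcases lt_trichotomy a b with hab | hab | hab
  · exact absurd h.isBigO ((isLittleO_rpow_rpow_nhdsGT_zero hab).not_isBigO (hne b))
  · exact hab
  · exact absurd h.symm.isBigO ((isLittleO_rpow_rpow_nhdsGT_zero hab).not_isBigO (hne a))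

theorem isEquivalent_dist_of_isLittleO {α X : Type*} [PseudoMetricSpace X] {l : Filter α}
    {δ₁ δ₂ δ₁' δ₂' : α → X}
    (h : (fun t => dist (δ₁ t) (δ₁' t) + dist (δ₂ t) (δ₂' t)) =o[l]
      fun t => dist (δ₁' t) (δ₂' t)) :
    (fun t => dist (δ₁ t) (δ₂ t)) ~[l] fun t => dist (δ₁' t) (δ₂' t) := by
  refine IsBigO.trans_isLittleO (IsBigO.of_bound' (Eventually.of_forall fun t => ?_)) h
  rw [Pi.sub_apply, ← dist_eq_norm, Real.norm_of_nonneg (by positivity)]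
  exact dist_dist_dist_le _ _ _ _

/-- Contact exponents strictly smaller than the correction exponent are preserved. -/
theorem contact_preserved {X : Type*} [MetricSpace X]
    (δ₁ δ₂ δ₁' δ₂' : ℝ → X) (q q' q'' : ℝ)
    (h₁ : ThetaAt (fun t => dist (δ₁ t) (δ₁' t)) q)
    (h₂ : ThetaAt (fun t => dist (δ₂ t) (δ₂' t)) q)
    (h' : ThetaAt (fun t => dist (δ₁' t) (δ₂' t)) q')
    (hlt : q' < q)
    (h'' : ThetaAt (fun t => dist (δ₁ t) (δ₂ t)) q'') :
    q'' = q' := by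
  have hcorrection : (fun t => dist (δ₁ t) (δ₁' t) + dist (δ₂ t) (δ₂' t)) =o[𝓝[>] 0]
      fun t => dist (δ₁' t) (δ₂' t) :=
    ((h₁.isTheta.isBigO.add h₂.isTheta.isBigO).trans_isLittleO
      (isLittleO_rpow_rpow_nhdsGT_zero hlt)).trans_isBigO h'.isTheta.isBigO_symm
  apply eq_of_isTheta_rpow_nhdsGT_zero
  exact h''.isTheta.symm.trans
    ((isEquivalent_dist_of_isLittleO hcorrection).isTheta.trans h'.isTheta)
end

section
/- Let G be a finite connected graph with weights q : V(G) → ℚ and Q(v,v') the max over paths from v to v' of the min weight along the path. If v₀ is a vertex with q(v₀) = Q(v,v') realized on some path from v to v', and if v'' lies in the same connected component of G ∖ {v₀} as v while q(w) > q(v₀) for all vertices w on some path from v to v'' avoiding v₀, then Q(v,v'') > q(v₀) implies Q(v'',v') = Q(v,v'). More simply: if v and v'' lie in the same connected component of G ∖ {v₀} and Q(v,v'') > q(v₀) = Q(v,v'), then Q(v'',v') = Q(v,v') = q(v₀). -/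
/-- The minimum of the weight `q` over the vertices of a walk `w` (including endpoints). -/
def walkMin {V : Type*} (G : SimpleGraph V) (q : V → ℚ) {v v' : V}
    (w : G.Walk v v') : ℚ :=
  (w.support.map q).foldr min (q v)

/-! A max-min function `Q` satisfies the ultrametric-type inequality
`min (Q a b) (Q b c) ≤ Q a c`: concatenating optimal walks `a → b → c` gives a walk whose minimum is
the smaller of the two. With `Q a b > q v₀ = Q v v'`, this forces `Q v'' v' ≤ q v₀` (route
`v → v'' → v'`) and `q v₀ ≤ Q v'' v'` (route `v'' → v → v'`). -/

theorem List.le_foldr_min_iff {α : Type*} [LinearOrder α] {c a : α} {l : List α} :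
    c ≤ l.foldr min a ↔ c ≤ a ∧ ∀ x ∈ l, c ≤ x := by
  induction l with
  | nil => simp
  | cons b t ih => simp only [List.foldr_cons, le_min_iff, ih, List.forall_mem_cons]; tauto

namespace SimpleGraph.Walk

variable {V : Type*} {G : SimpleGraph V} {q : V → ℚ} {a b c : V}

theorem le_walkMin_iff {r : ℚ} (w : G.Walk a b) :
    r ≤ walkMin G q w ↔ ∀ x ∈ w.support, r ≤ q x := by
  simp only [walkMin, List.le_foldr_min_iff, List.forall_mem_map, and_iff_right_iff_imp]
  exact fun h => h a w.start_mem_support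

theorem walkMin_le_of_mem (w : G.Walk a b) {x : V} (hx : x ∈ w.support) :
    walkMin G q w ≤ q x :=
  (le_walkMin_iff w).1 le_rfl x hx

theorem walkMin_reverse (w : G.Walk a b) : walkMin G q w.reverse = walkMin G q w := by
  refine le_antisymm ((le_walkMin_iff w).2 fun x hx => ?_) ((le_walkMin_iff _).2 fun x hx => ?_)
  · exact walkMin_le_of_mem _ (by simpa using hx)
  · exact walkMin_le_of_mem _ (by simpa using hx)

theorem min_walkMin_le_walkMin_append (w₁ : G.Walk a b) (w₂ : G.Walk b c) :
    min (walkMin G q w₁) (walkMin G q w₂) ≤ walkMin G q (w₁.append w₂) := by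
  refine (le_walkMin_iff _).2 fun x hx => ?_
  rcases (mem_support_append_iff w₁ w₂).1 hx with hx | hx
  · exact (min_le_left _ _).trans (walkMin_le_of_mem w₁ hx)
  · exact (min_le_right _ _).trans (walkMin_le_of_mem w₂ hx)

end SimpleGraph.Walk

section MaxMin

open SimpleGraph.Walk

variable {V : Type*} {G : SimpleGraph V} {q : V → ℚ} {Q : V → V → ℚ}

theorem maxmin_comm (hub : ∀ (a b : V) (w : G.Walk a b), walkMin G q w ≤ Q a b)
    (hmax : ∀ a b : V, ∃ w : G.Walk a b, walkMin G q w = Q a b) (a b : V) :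
    Q a b = Q b a := by
  have key : ∀ a b, Q a b ≤ Q b a := fun a b => by
    obtain ⟨w, hw⟩ := hmax a b
    simpa [hw, walkMin_reverse] using hub b a w.reverse
  exact le_antisymm (key a b) (key b a)

theorem min_maxmin_le (hub : ∀ (a b : V) (w : G.Walk a b), walkMin G q w ≤ Q a b)
    (hmax : ∀ a b : V, ∃ w : G.Walk a b, walkMin G q w = Q a b) (a b c : V) :
    min (Q a b) (Q b c) ≤ Q a c := by
  obtain ⟨w₁, hw₁⟩ := hmax a b
  obtain ⟨w₂, hw₂⟩ := hmax b c
  calc min (Q a b) (Q b c) = min (walkMin G q w₁) (walkMin G q w₂) := by rw [hw₁, hw₂]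
    _ ≤ walkMin G q (w₁.append w₂) := min_walkMin_le_walkMin_append w₁ w₂
    _ ≤ Q a c := hub a c _

end MaxMin

theorem maxmin_separating_vertex_general {V : Type*} (G : SimpleGraph V)
    (q : V → ℚ) (Q : V → V → ℚ)
    (hub : ∀ (a b : V) (w : G.Walk a b), walkMin G q w ≤ Q a b)
    (hmax : ∀ a b : V, ∃ w : G.Walk a b, walkMin G q w = Q a b)
    (v v' v'' v₀ : V)
    (hgt : q v₀ < Q v v'')
    (heq : Q v v' = q v₀) :
    Q v'' v' = q v₀ := by
  have via_v'' := min_maxmin_le hub hmax v v'' v'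
  have via_v := min_maxmin_le hub hmax v'' v v'
  rw [maxmin_comm hub hmax v'' v, heq] at via_v
  rw [heq] at via_v''
  refine le_antisymm ?_ ?_
  · by_contra! h
    exact (lt_min hgt h).not_ge via_v''
  · rwa [min_eq_right hgt.le] at via_v

/-- If `v` and `v''` lie in the same connected component of `G ∖ {v₀}` and
`Q(v,v'') > q(v₀) = Q(v,v')`, then `Q(v'',v') = Q(v,v') = q(v₀)`. -/
theorem maxmin_separating_vertex {V : Type*} [Fintype V] (G : SimpleGraph V)
    (hconn : G.Connected) (q : V → ℚ) (Q : V → V → ℚ)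
    (hub : ∀ (a b : V) (w : G.Walk a b), walkMin G q w ≤ Q a b)
    (hmax : ∀ a b : V, ∃ w : G.Walk a b, walkMin G q w = Q a b)
    (v v' v'' v₀ : V)
    (hcomp : ∃ w : G.Walk v v'', v₀ ∉ w.support)
    (hgt : q v₀ < Q v v'')
    (heq : Q v v' = q v₀) :
    Q v'' v' = q v₀ :=
  maxmin_separating_vertex_general G q Q hub hmax v v' v'' v₀ hgt heq
end
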